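/- In the GRW specialization of the pointwise model with g(P,P) = −1, ω = 1, and Ric(P,X) = (n−1)·π(X) for all X ∈ V: the Einstein type condition of the fourth kind Ric⁴ = (r⁴/n)·g holds if and only if Ric = (n−1)·(2g + π⊗π); and in that case the scalar curvature is the constant r = (n−1)(2n−1). -/

import Mathlib

/-!
Write `c = n - 1`. The Ricci identity gives `Ric⁴(P,P) = -c` while `g(P,P) = -1`, and a form
proportional to `g` is determined by its value on a non-null vector, so the Einstein condition
`Ric⁴ = (r⁴/n) g` says exactly `Ric⁴ = c g`, i.e. `Ric = c (2g + π⊗π)`. Taking the `g`-trace,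
`tr_g g = n` and `tr_g (π⊗π) = π(P) = -1` give `r = c (2n - 1)`.
-/

/-- The `g`-trace of a bilinear form `B`: the trace of the endomorphism
`(g♭)⁻¹ ∘ B♭` of `V`, where `B♭ : V → V*` is `X ↦ B(X,·)`. -/
noncomputable def trG {V : Type*} [AddCommGroup V] [Module ℝ V] [FiniteDimensional ℝ V]
    (g : LinearMap.BilinForm ℝ V) (hg : g.Nondegenerate)
    (B : LinearMap.BilinForm ℝ V) : ℝ :=
  LinearMap.trace ℝ V ((g.toDual hg).symm.toLinearMap ∘ₗ B)

section TraceG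

variable {V : Type*} [AddCommGroup V] [Module ℝ V] [FiniteDimensional ℝ V]
  (g : LinearMap.BilinForm ℝ V) (hg : g.Nondegenerate)

lemma trG_add (B C : LinearMap.BilinForm ℝ V) :
    trG g hg (B + C) = trG g hg B + trG g hg C := by
  simp [trG, LinearMap.comp_add]

lemma trG_smul (c : ℝ) (B : LinearMap.BilinForm ℝ V) :
    trG g hg (c • B) = c * trG g hg B := by
  simp [trG, LinearMap.comp_smul]

lemma trG_self : trG g hg g = Module.finrank ℝ V := by
  have h : (g.toDual hg).symm.toLinearMap ∘ₗ g = LinearMap.id :=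
    LinearMap.ext (g.toDual hg).symm_apply_apply
  rw [trG, h, LinearMap.trace_id]

lemma trG_smulRight (f φ : Module.Dual ℝ V) :
    trG g hg (f.smulRight φ) = f ((g.toDual hg).symm φ) := by
  have h : (g.toDual hg).symm.toLinearMap ∘ₗ f.smulRight φ =
      f.smulRight ((g.toDual hg).symm φ) := by
    ext X
    simp
  rw [trG, h, LinearMap.trace_smulRight]

lemma toDual_symm_flip (hgs : g.IsSymm) (P : V) : (g.toDual hg).symm (g.flip P) = P := by
  rw [LinearEquiv.symm_apply_eq]
  ext X
  simp [LinearMap.BilinForm.toDual_def, hgs.eq P X]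

lemma trG_smulRight_flip (hgs : g.IsSymm) (f : Module.Dual ℝ V) (P : V) :
    trG g hg (f.smulRight (g.flip P)) = f P := by
  rw [trG_smulRight, toDual_symm_flip g hg hgs]

lemma eq_trG_div_finrank_smul_iff (B : LinearMap.BilinForm ℝ V) {P : V} (hP : g P P ≠ 0) :
    B = (trG g hg B / Module.finrank ℝ V) • g ↔ B = (B P P / g P P) • g := by
  have hV : (Module.finrank ℝ V : ℝ) ≠ 0 := by
    have hP0 : P ≠ 0 := by rintro rfl; simp at hP
    exact_mod_cast (Module.finrank_pos_iff_exists_ne_zero.mpr ⟨P, hP0⟩).ne'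
  constructor
  · intro h
    have hfactor : B P P / g P P = trG g hg B / Module.finrank ℝ V := by
      rw [div_eq_iff hP]
      exact LinearMap.congr_fun₂ h P P
    rwa [hfactor]
  · intro h
    rw [h, trG_smul, trG_self, mul_div_cancel_right₀ _ hV]

end TraceG

theorem stmt_13_general {V : Type*} [AddCommGroup V] [Module ℝ V] [FiniteDimensional ℝ V]
    (n : ℕ) (hdim : Module.finrank ℝ V = n)
    (g : LinearMap.BilinForm ℝ V) (hg : g.Nondegenerate) (hgs : g.IsSymm)
    (P : V) (hP : g P P = -1) (π : V →ₗ[ℝ] ℝ) (hπ : π = g.flip P)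
    (ω : ℝ) (hω : ω = 1)
    (ππ : LinearMap.BilinForm ℝ V) (hππ : ππ = π.smulRight π)
    (Ric : LinearMap.BilinForm ℝ V)
    (hRicP : ∀ X : V, Ric P X = ((n : ℝ) - 1) * π X)
    (Ric4 : LinearMap.BilinForm ℝ V)
    (hRic4 : Ric4 = Ric - (((n : ℝ) - 1) * ω) • g - ((n : ℝ) - 1) • ππ) :
    (Ric4 = (trG g hg Ric4 / (n : ℝ)) • g ↔
      Ric = ((n : ℝ) - 1) • ((2 : ℝ) • g + ππ)) ∧
    (Ric4 = (trG g hg Ric4 / (n : ℝ)) • g →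
      trG g hg Ric = ((n : ℝ) - 1) * (2 * (n : ℝ) - 1)) := by
  have hπP : π P = -1 := by rw [hπ]; simpa using hP
  have hRic4PP : Ric4 P P = -((n : ℝ) - 1) := by
    simp only [hRic4, hππ, hω, LinearMap.sub_apply, LinearMap.smul_apply,
      LinearMap.smulRight_apply, smul_eq_mul, hRicP, hπP, hP]
    ring
  have hEinstein : Ric4 = (trG g hg Ric4 / (n : ℝ)) • g ↔ Ric4 = ((n : ℝ) - 1) • g := by
    rw [← hdim, eq_trG_div_finrank_smul_iff g hg Ric4 (by rw [hP]; norm_num),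
      hRic4PP, hP, hdim, neg_div_neg_eq, div_one]
  have hRic : Ric4 = ((n : ℝ) - 1) • g ↔ Ric = ((n : ℝ) - 1) • ((2 : ℝ) • g + ππ) := by
    rw [hRic4, hω]
    constructor
    · intro h
      calc Ric = (Ric - ((n - 1 : ℝ) * 1) • g - (n - 1 : ℝ) • ππ) + (n - 1 : ℝ) • g
            + (n - 1 : ℝ) • ππ := by module
        _ = _ := by rw [h]; module
    · intro h
      rw [h]
      module
  have htrππ : trG g hg ππ = -1 := by
    rw [hππ, hπ, trG_smulRight_flip g hg hgs, ← hπ, hπP]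
  refine ⟨hEinstein.trans hRic, fun h => ?_⟩
  rw [hRic.mp (hEinstein.mp h), trG_smul, trG_add, trG_smul, trG_self, hdim, htrππ]
  ring

theorem stmt_13 {V : Type*} [AddCommGroup V] [Module ℝ V] [FiniteDimensional ℝ V]
    (n : ℕ) (hn : 3 ≤ n) (hdim : Module.finrank ℝ V = n)
    (g : LinearMap.BilinForm ℝ V) (hg : g.Nondegenerate) (hgs : g.IsSymm)
    (P : V) (hP : g P P = -1) (π : V →ₗ[ℝ] ℝ) (hπ : π = g.flip P)
    (ω : ℝ) (hω : ω = 1)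
    (ππ : LinearMap.BilinForm ℝ V) (hππ : ππ = π.smulRight π)
    (Ric : LinearMap.BilinForm ℝ V) (hRicSymm : Ric.IsSymm)
    (hRicP : ∀ X : V, Ric P X = ((n : ℝ) - 1) * π X)
    (Ric4 : LinearMap.BilinForm ℝ V)
    (hRic4 : Ric4 = Ric - (((n : ℝ) - 1) * ω) • g - ((n : ℝ) - 1) • ππ) :
    (Ric4 = (trG g hg Ric4 / (n : ℝ)) • g ↔
      Ric = ((n : ℝ) - 1) • ((2 : ℝ) • g + ππ)) ∧
    (Ric4 = (trG g hg Ric4 / (n : ℝ)) • g →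
      trG g hg Ric = ((n : ℝ) - 1) * (2 * (n : ℝ) - 1)) :=
  stmt_13_general n hdim g hg hgs P hP π hπ ω hω ππ hππ Ric hRicP Ric4 hRic4
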